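/- Let Π be a polyhedral complex in ℝⁿ whose support |Π| is connected and satisfies the Minkowski-Weyl condition, and assume every polyhedron of Π is strongly convex (contains no line). Then rec(Π) = {rec(Λ) | Λ ∈ Π} is a fan, i.e., a conic polyhedral complex all of whose members are strongly convex polyhedral cones. -/

import Mathlib

open Set Pointwise

variable {E : Type*} [NormedAddCommGroup E] [NormedSpace ℝ E]

/-- A polyhedron: an intersection of finitely many closed halfspaces. -/
def IsPolyhedron (S : Set E) : Prop :=
  ∃ (m : ℕ) (f : Fin m → E →ₗ[ℝ] ℝ) (b : Fin m → ℝ), S = {x | ∀ i, f i x ≤ b i}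

/-- A polytope: the convex hull of a (nonempty) finite set of points. -/
def IsPolytope (S : Set E) : Prop :=
  ∃ F : Finset E, F.Nonempty ∧ S = convexHull ℝ (F : Set E)

/-- A convex polyhedral cone: the set of nonnegative combinations of finitely
many vectors. -/
def IsPolyhedralCone (S : Set E) : Prop :=
  ∃ F : Finset E, S = {x | ∃ c : E → ℝ, (∀ v, 0 ≤ c v) ∧ x = ∑ v ∈ F, c v • v}

/-- The local recession cone of `S` at `p`:
`{u | p + t • u ∈ S for all t ≥ 0}`. -/
def locRec (S : Set E) (p : E) : Set E := {u | ∀ t : ℝ, 0 ≤ t → p + t • u ∈ S}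

/-- The recession cone of a set: the intersection of all local recession
cones. -/
def recSet (S : Set E) : Set E := ⋂ p ∈ S, locRec S p

/-- The recession cone of a polyhedron: `{u | S + u ⊆ S}`. -/
def recPoly (S : Set E) : Set E := {u | ∀ x ∈ S, x + u ∈ S}

/-- `S_x`: the set of points of `S` minimizing the linear functional `x`. -/
def faceSet (S : Set E) (x : E →ₗ[ℝ] ℝ) : Set E := {u ∈ S | ∀ v ∈ S, x u ≤ x v}

/-- A face of `S`: a nonempty subset of the form `S_x`. -/
def IsFaceOf (F S : Set E) : Prop := F.Nonempty ∧ ∃ x : E →ₗ[ℝ] ℝ, F = faceSet S x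

/-- A polyhedral complex: a nonempty finite collection of (nonempty) polyhedra,
closed under taking faces, in which any two members that meet intersect in a
common face. -/
def IsPolyComplex (P : Set (Set E)) : Prop :=
  P.Nonempty ∧ P.Finite ∧ (∀ S ∈ P, IsPolyhedron S ∧ S.Nonempty) ∧
  (∀ S ∈ P, ∀ F : Set E, IsFaceOf F S → F ∈ P) ∧
  ∀ S ∈ P, ∀ T ∈ P, (S ∩ T).Nonempty → IsFaceOf (S ∩ T) S ∧ IsFaceOf (S ∩ T) T

/-- The support of a collection of sets. -/
def polySupport (P : Set (Set E)) : Set E := ⋃ S ∈ P, S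

/-- The Minkowski-Weyl condition: every local recession cone equals the global
recession cone. -/
def MWCondition (S : Set E) : Prop := ∀ p ∈ S, locRec S p = recSet S

/-- A conic polyhedral complex: a polyhedral complex all of whose members are
convex polyhedral cones. -/
def IsConicPolyComplex (P : Set (Set E)) : Prop :=
  IsPolyComplex P ∧ ∀ S ∈ P, IsPolyhedralCone S

/-- Strongly convex: contains no affine line. -/
def StronglyConvexSet (S : Set E) : Prop :=
  ¬ ∃ p d : E, d ≠ 0 ∧ ∀ t : ℝ, p + t • d ∈ S

/-- A fan: a conic polyhedral complex all of whose members are strongly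
convex. -/
def IsFan (P : Set (Set E)) : Prop :=
  IsConicPolyComplex P ∧ ∀ S ∈ P, StronglyConvexSet S

/-- The recession of a complex: the collection of recession cones of its
members. -/
def recComplex (P : Set (Set E)) : Set (Set E) := {C | ∃ Λ ∈ P, C = recPoly Λ}

/-- The cone `c(S)` over a set `S ⊆ E`, inside `E × ℝ`: the closure of
`{t • (u, 1) | u ∈ S, t > 0}`. -/
def coneOver (S : Set E) : Set (E × ℝ) :=
  closure {y | ∃ u ∈ S, ∃ t : ℝ, 0 < t ∧ y = t • (u, (1 : ℝ))}

/-- The open cone `c°(S)` over `S`: `{t • (u, 1) | u ∈ S, t > 0}`. -/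
def openCone (S : Set E) : Set (E × ℝ) :=
  {y | ∃ u ∈ S, ∃ t : ℝ, 0 < t ∧ y = t • (u, (1 : ℝ))}

/-- The cone `c(Π)` of a complex: the cones over its members together with the
recession cones of its members placed at height `0`. -/
def coneComplex (P : Set (Set E)) : Set (Set (E × ℝ)) :=
  {C | ∃ Λ ∈ P, C = coneOver Λ} ∪
  {C | ∃ Λ ∈ P, C = (recPoly Λ) ×ˢ ({0} : Set ℝ)}

/-- `aff` of a conic complex in `E × ℝ`: the nonempty intersections of its
members with the hyperplane `E × {1}`, regarded as subsets of `E`. -/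
def affOf (P : Set (Set (E × ℝ))) : Set (Set E) :=
  {L | L.Nonempty ∧ ∃ σ ∈ P, L = {u | (u, (1 : ℝ)) ∈ σ}}

/-- A polyhedral set: a finite union of polyhedra. -/
def IsPolyhedralSet (S : Set E) : Prop :=
  ∃ (k : ℕ) (f : Fin k → Set E), (∀ i, IsPolyhedron (f i)) ∧ S = ⋃ i, f i

/-- A finite union of polytopes. -/
def IsFiniteUnionOfPolytopes (S : Set E) : Prop :=
  ∃ (k : ℕ) (f : Fin k → Set E), (∀ i, IsPolytope (f i)) ∧ S = ⋃ i, f i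

set_option linter.unusedSectionVars false
section Aux
open Relation

variable {E : Type*} [NormedAddCommGroup E] [NormedSpace ℝ E]

/-- intersection of halfspaces with index type ι -/
def hSet {ι : Type*} (f : ι → E →ₗ[ℝ] ℝ) (b : ι → ℝ) : Set E := {x | ∀ i, f i x ≤ b i}

lemma zero_mem_hSet0 {ι : Type*} (f : ι → E →ₗ[ℝ] ℝ) : (0:E) ∈ hSet f 0 := by
  intro i; simp [hSet]

lemma hSet0_add {ι : Type*} {f : ι → E →ₗ[ℝ] ℝ} {x y : E}
    (hx : x ∈ hSet f 0) (hy : y ∈ hSet f 0) : x + y ∈ hSet f 0 := by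
  intro i
  have := add_nonpos (hx i) (hy i)
  simpa [map_add] using this

lemma hSet0_smul {ι : Type*} {f : ι → E →ₗ[ℝ] ℝ} {x : E}
    (hx : x ∈ hSet f 0) {t : ℝ} (ht : 0 ≤ t) : t • x ∈ hSet f 0 := by
  intro i
  have : f i (t • x) = t * f i x := by simp [map_smul]
  have h2 : t * f i x ≤ 0 := mul_nonpos_of_nonneg_of_nonpos ht (hx i)
  simpa [this] using h2

lemma hSet_inter {ι κ : Type*} (f : ι → E →ₗ[ℝ] ℝ) (b : ι → ℝ)
    (g : κ → E →ₗ[ℝ] ℝ) (c : κ → ℝ) :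
    hSet (Sum.elim f g) (Sum.elim b c) = hSet f b ∩ hSet g c := by
  ext u
  constructor
  · exact fun h => ⟨fun i => h (Sum.inl i), fun j => h (Sum.inr j)⟩
  · rintro ⟨h1, h2⟩ (i | j)
    · exact h1 i
    · exact h2 j

lemma hSet0_pair {ι κ : Type*} (f : ι → E →ₗ[ℝ] ℝ) (g : κ → E →ₗ[ℝ] ℝ) :
    hSet (Sum.elim f g) (0 : ι ⊕ κ → ℝ) = hSet f 0 ∩ hSet g 0 := by
  have := hSet_inter f 0 g (0 : κ → ℝ)
  convert this using 2
  ext (i | j) <;> rfl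

lemma convex_hSet {ι : Type*} (f : ι → E →ₗ[ℝ] ℝ) (b : ι → ℝ) : Convex ℝ (hSet f b) := by
  intro x hx y hy a c ha hc hac
  intro i
  have : f i (a • x + c • y) = a * f i x + c * f i y := by simp [map_add, map_smul]
  rw [this]
  calc a * f i x + c * f i y ≤ a * b i + c * b i := by
        gcongr
        · exact hx i
        · exact hy i
    _ = b i := by rw [← add_mul, hac, one_mul]

lemma isClosed_hSet [FiniteDimensional ℝ E] {ι : Type*} (f : ι → E →ₗ[ℝ] ℝ) (b : ι → ℝ) :
    IsClosed (hSet f b) := by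
  have : hSet f b = ⋂ i, (f i) ⁻¹' (Set.Iic (b i)) := by
    ext u; simp [hSet]
  rw [this]
  exact isClosed_iInter fun i =>
    IsClosed.preimage (f i).continuous_of_finiteDimensional isClosed_Iic

lemma arch_le_zero {c e d : ℝ} (h : ∀ k : ℕ, c + k * d ≤ e) : d ≤ 0 := by
  by_contra hd
  push_neg at hd
  obtain ⟨k, hk⟩ := exists_nat_gt ((e - c) / d)
  have := h k
  have h2 : (e - c) / d < k := hk
  have h3 : e - c < k * d := (div_lt_iff₀ hd).mp h2
  linarith

lemma zero_mem_recPoly (S : Set E) : (0:E) ∈ recPoly S := by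
  intro x hx; simpa using hx

lemma recPoly_hSet {ι : Type*} (f : ι → E →ₗ[ℝ] ℝ) (b : ι → ℝ)
    (hne : (hSet f b).Nonempty) : recPoly (hSet f b) = hSet f 0 := by
  ext u
  constructor
  · intro hu i
    obtain ⟨p, hp⟩ := hne
    have hstep : ∀ k : ℕ, p + (k : ℕ) • u ∈ hSet f b := by
      intro k
      induction k with
      | zero => simpa using hp
      | succ k ih =>
          have := hu _ ih
          have he : p + (k+1 : ℕ) • u = (p + (k:ℕ) • u) + u := by
            rw [add_assoc, ← succ_nsmul]
          rwa [he]
    have harith : ∀ k : ℕ, f i p + k * f i u ≤ b i := by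
      intro k
      have := hstep k i
      have he : f i (p + (k:ℕ) • u) = f i p + k * f i u := by
        rw [map_add, map_nsmul]
        simp [nsmul_eq_mul]
      rwa [he] at this
    exact arch_le_zero harith
  · intro hu x hx i
    have h1 := hx i
    have h2 := hu i
    have : f i (x + u) = f i x + f i u := by rw [map_add]
    rw [this]
    have : (0:ℝ) + 0 = 0 := by ring
    calc f i x + f i u ≤ b i + 0 := add_le_add h1 h2
      _ = b i := by ring

/-- moving along a recession direction for real nonneg time stays inside. -/
lemma recPoly_ray {ι : Type*} {f : ι → E →ₗ[ℝ] ℝ} {b : ι → ℝ} {u p : E}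
    (hu : u ∈ recPoly (hSet f b)) (hp : p ∈ hSet f b) {t : ℝ} (ht : 0 ≤ t) :
    p + t • u ∈ hSet f b := by
  have h0 : u ∈ hSet f 0 := by
    rw [recPoly_hSet f b ⟨p, hp⟩] at hu; exact hu
  intro i
  have : f i (p + t • u) = f i p + t * f i u := by simp [map_add, map_smul]
  rw [this]
  have h2 : t * f i u ≤ 0 := mul_nonpos_of_nonneg_of_nonpos ht (h0 i)
  have := hp i
  linarith

/-- a full ray inside a polyhedron forces its direction into the recession cone -/
lemma ray_mem_recPoly {ι : Type*} {f : ι → E →ₗ[ℝ] ℝ} {b : ι → ℝ} {u p : E}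
    (hp : ∀ t : ℝ, 0 ≤ t → p + t • u ∈ hSet f b) : u ∈ recPoly (hSet f b) := by
  have hpΛ : p ∈ hSet f b := by simpa using hp 0 le_rfl
  rw [recPoly_hSet f b ⟨p, hpΛ⟩]
  intro i
  have harith : ∀ k : ℕ, f i p + k * f i u ≤ b i := by
    intro k
    have := hp k (by positivity) i
    have he : f i (p + (k:ℝ) • u) = f i p + k * f i u := by simp [map_add, map_smul]
    rwa [he] at this
  exact arch_le_zero harith

end Aux
set_option linter.unusedSectionVars false
set_option maxHeartbeats 1000000
section Aux2
open Relation

variable {E : Type*} [NormedAddCommGroup E] [NormedSpace ℝ E]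

lemma faceSet_subset (S : Set E) (x : E →ₗ[ℝ] ℝ) : faceSet S x ⊆ S := fun _ h => h.1

lemma faceSet_const {S : Set E} {x : E →ₗ[ℝ] ℝ} {u v : E}
    (hu : u ∈ faceSet S x) (hv : v ∈ faceSet S x) : x u = x v :=
  le_antisymm (hu.2 v hv.1) (hv.2 u hu.1)

/-- nonempty faces of an H-cone: the functional is nonneg on the cone and the
face is the zero locus. -/
lemma cone_face {ι : Type*} (f : ι → E →ₗ[ℝ] ℝ) (x : E →ₗ[ℝ] ℝ)
    (hne : (faceSet (hSet f 0) x).Nonempty) :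
    (∀ v ∈ hSet f 0, 0 ≤ x v) ∧ faceSet (hSet f 0) x = {u | u ∈ hSet f 0 ∧ x u = 0} := by
  obtain ⟨u₀, hu₀⟩ := hne
  have hnn : ∀ v ∈ hSet f 0, 0 ≤ x v := by
    intro v hv
    by_contra hneg
    push_neg at hneg
    have h0 : x u₀ ≤ x 0 := hu₀.2 0 (zero_mem_hSet0 f)
    rw [map_zero] at h0
    -- choose t with t * x v < x u₀
    have ht : ∃ t : ℝ, 0 ≤ t ∧ t * x v < x u₀ := by
      refine ⟨(x u₀ - 1) / x v, ?_, ?_⟩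
      · rw [div_nonneg_iff]
        right
        exact ⟨by linarith, le_of_lt hneg⟩
      · rw [div_mul_cancel₀ _ (ne_of_lt hneg)]; linarith
    obtain ⟨t, ht0, htv⟩ := ht
    have := hu₀.2 (t • v) (hSet0_smul hv ht0)
    rw [map_smul, smul_eq_mul] at this
    linarith
  constructor
  · exact hnn
  · ext u
    constructor
    · intro hu
      refine ⟨hu.1, le_antisymm ?_ (hnn u hu.1)⟩
      have := hu.2 0 (zero_mem_hSet0 f)
      simpa using this
    · rintro ⟨h1, h2⟩
      exact ⟨h1, fun v hv => by rw [h2]; exact hnn v hv⟩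

/-- Lemma (iv): recession of a nonempty face is the corresponding face of the
recession cone. -/
lemma recPoly_faceSet {ι : Type*} (f : ι → E →ₗ[ℝ] ℝ) (b : ι → ℝ) (x : E →ₗ[ℝ] ℝ)
    (hne : (faceSet (hSet f b) x).Nonempty) :
    recPoly (faceSet (hSet f b) x) = faceSet (recPoly (hSet f b)) x := by
  obtain ⟨p₀, hp₀⟩ := hne
  have hΛne : (hSet f b).Nonempty := ⟨p₀, hp₀.1⟩
  have hrec : recPoly (hSet f b) = hSet f 0 := recPoly_hSet f b hΛne
  -- x is nonneg on the recession cone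
  have hnn : ∀ v ∈ hSet f 0, 0 ≤ x v := by
    intro v hv
    have hmem : p₀ + v ∈ hSet f b := by
      intro i
      have he : f i (p₀ + v) = f i p₀ + f i v := map_add _ _ _
      rw [he]
      have h1 := hp₀.1 i
      have h2 : f i v ≤ 0 := hv i
      linarith
    have := hp₀.2 (p₀ + v) hmem
    rw [map_add] at this
    linarith
  have hface : (faceSet (hSet f 0) x).Nonempty := by
    refine ⟨0, zero_mem_hSet0 f, fun v hv => ?_⟩
    rw [map_zero]; exact hnn v hv
  have hchar := (cone_face f x hface).2
  rw [hrec, hchar]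
  ext u
  constructor
  · intro hu
    -- p₀ + k u ∈ face for all k
    have hstep : ∀ k : ℕ, p₀ + (k : ℕ) • u ∈ faceSet (hSet f b) x := by
      intro k
      induction k with
      | zero => simpa using hp₀
      | succ k ih =>
          have := hu _ ih
          have he : p₀ + (k+1 : ℕ) • u = (p₀ + (k:ℕ) • u) + u := by
            rw [add_assoc, ← succ_nsmul]
          rwa [he]
    constructor
    · intro i
      have harith : ∀ k : ℕ, f i p₀ + k * f i u ≤ b i := by
        intro k
        have := (hstep k).1 i
        have he : f i (p₀ + (k:ℕ) • u) = f i p₀ + k * f i u := by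
          rw [map_add, map_nsmul]; simp [nsmul_eq_mul]
        rwa [he] at this
      simpa using arch_le_zero harith
    · have h1 : p₀ + u ∈ faceSet (hSet f b) x := by simpa using hstep 1
      have := faceSet_const h1 hp₀
      rw [map_add] at this
      linarith
  · rintro ⟨hu1, hu2⟩
    intro z hz
    refine ⟨?_, ?_⟩
    · intro i
      have he : f i (z + u) = f i z + f i u := map_add _ _ _
      rw [he]
      have h3 := hz.1 i
      have h4 : f i u ≤ 0 := hu1 i
      linarith
    · intro v hv
      have he : x (z + u) = x z + x u := map_add _ _ _
      rw [he, hu2, add_zero]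
      exact hz.2 v hv

/-- helper: existence of a uniform ε for moving backwards. -/
lemma exists_eps {ι : Type*} [Fintype ι] (a c : ι → ℝ)
    (ha : ∀ i, a i ≤ 0) (hc : ∀ i, c i ≤ 0) (hac : ∀ i, a i < 0 ∨ c i = 0) :
    ∃ ε : ℝ, 0 < ε ∧ ∀ i, a i - ε * c i ≤ 0 := by
  classical
  set s : Finset ι := Finset.univ.filter (fun i => c i < 0) with hs
  by_cases hsne : s.Nonempty
  · refine ⟨min 1 (s.inf' hsne (fun i => a i / c i)), ?_, ?_⟩
    · apply lt_min one_pos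
      apply (Finset.lt_inf'_iff hsne).2
      intro i hi
      have hci : c i < 0 := by
        have := Finset.mem_filter.mp hi
        exact this.2
      have hai : a i < 0 := by
        rcases hac i with h | h
        · exact h
        · rw [h] at hci; exact absurd hci (lt_irrefl 0)
      exact div_pos_of_neg_of_neg hai hci
    · intro i
      by_cases hci : c i < 0
      · have hmem : i ∈ s := Finset.mem_filter.mpr ⟨Finset.mem_univ i, hci⟩
        have hle : min 1 (s.inf' hsne (fun i => a i / c i)) ≤ a i / c i :=
          le_trans (min_le_right _ _) (Finset.inf'_le _ hmem)
        -- ε ≤ a i / c i, c i < 0 ⇒ ε * c i ≥ a i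
        have := mul_le_mul_of_nonpos_right hle (le_of_lt hci)
        rw [div_mul_cancel₀ _ (ne_of_lt hci)] at this
        linarith
      · have : c i = 0 := le_antisymm (hc i) (not_lt.mp hci)
        rw [this, mul_zero, sub_zero]
        exact ha i
  · refine ⟨1, one_pos, fun i => ?_⟩
    have : ¬ c i < 0 := fun h => hsne ⟨i, Finset.mem_filter.mpr ⟨Finset.mem_univ i, h⟩⟩
    have hci : c i = 0 := le_antisymm (hc i) (not_lt.mp this)
    rw [hci, mul_zero, sub_zero]
    exact ha i

/-- a relative interior point of an H-cone -/
lemma exists_relint {ι : Type*} [Fintype ι] (h : ι → E →ₗ[ℝ] ℝ) :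
    ∃ w ∈ hSet h 0, ∀ x : E →ₗ[ℝ] ℝ,
      (∀ u ∈ hSet h 0, 0 ≤ x u) → x w = 0 → ∀ v ∈ hSet h 0, x v = 0 := by
  classical
  set u : ι → E := fun i => if hex : ∃ z ∈ hSet h (0 : ι → ℝ), h i z < 0 then hex.choose else 0
    with hu
  have humem : ∀ i, u i ∈ hSet h 0 := by
    intro i
    rw [hu]
    by_cases hex : ∃ z ∈ hSet h (0 : ι → ℝ), h i z < 0
    · simp only [dif_pos hex]
      exact hex.choose_spec.1
    · simp only [dif_neg hex]
      exact zero_mem_hSet0 h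
  set w : E := ∑ i, u i with hw
  have hwmem : w ∈ hSet h 0 :=
    Finset.sum_induction u (· ∈ hSet h 0) (fun _ _ ha hb => hSet0_add ha hb)
      (zero_mem_hSet0 h) (fun i _ => humem i)
  have hkey : ∀ i, h i w < 0 ∨ ∀ v ∈ hSet h 0, h i v = 0 := by
    intro i
    by_cases hex : ∃ z ∈ hSet h (0 : ι → ℝ), h i z < 0
    · left
      have hval : h i (u i) < 0 := by
        rw [hu]; simp only [dif_pos hex]; exact hex.choose_spec.2
      have : h i w = ∑ j, h i (u j) := by rw [hw, map_sum]
      rw [this, ← Finset.sum_erase_add _ _ (Finset.mem_univ i)]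
      have hrest : ∑ j ∈ Finset.univ.erase i, h i (u j) ≤ 0 :=
        Finset.sum_nonpos (fun j _ => (humem j) i)
      linarith
    · right
      intro v hv
      push_neg at hex
      exact le_antisymm (hv i) (hex v hv)
  refine ⟨w, hwmem, ?_⟩
  intro x hx hxw v hv
  -- find ε > 0 with w - ε v ∈ cone
  have hac : ∀ i, h i w < 0 ∨ h i v = 0 := by
    intro i
    rcases hkey i with hlt | hzero
    · exact Or.inl hlt
    · exact Or.inr (hzero v hv)
  obtain ⟨ε, hε, hεi⟩ := exists_eps (fun i => h i w) (fun i => h i v)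
    (fun i => hwmem i) (fun i => hv i) hac
  have hmem : w - ε • v ∈ hSet h 0 := by
    intro i
    have : h i (w - ε • v) = h i w - ε * h i v := by
      rw [map_sub, map_smul, smul_eq_mul]
    rw [this]
    simpa using hεi i
  have h1 : 0 ≤ x (w - ε • v) := hx _ hmem
  rw [map_sub, map_smul, smul_eq_mul, hxw] at h1
  have hxv0 : x v ≤ 0 := by nlinarith
  exact le_antisymm hxv0 (hx v hv)

/-- Lemma E: an extreme subcone of an H-cone is an (exposed) face. -/
lemma extreme_isFace {ι : Type*} [Fintype ι] (f : ι → E →ₗ[ℝ] ℝ) (τ : Set E)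
    (hsub : τ ⊆ hSet f 0) (h0 : (0:E) ∈ τ)
    (hadd : ∀ a ∈ τ, ∀ b ∈ τ, a + b ∈ τ)
    (hsmul : ∀ a ∈ τ, ∀ t : ℝ, 0 < t → t • a ∈ τ)
    (hext : ∀ a ∈ hSet f 0, ∀ b ∈ hSet f 0, a + b ∈ τ → a ∈ τ ∧ b ∈ τ) :
    ∃ x : E →ₗ[ℝ] ℝ, τ = faceSet (hSet f 0) x := by
  classical
  set u : ι → E := fun i => if hex : ∃ z ∈ τ, f i z < 0 then hex.choose else 0 with hu
  have humem : ∀ i, u i ∈ τ := by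
    intro i
    rw [hu]
    by_cases hex : ∃ z ∈ τ, f i z < 0
    · simp only [dif_pos hex]; exact hex.choose_spec.1
    · simp only [dif_neg hex]; exact h0
  set w : E := ∑ i, u i with hw
  have hwmem : w ∈ τ :=
    Finset.sum_induction u (· ∈ τ) (fun a b ha hb => hadd a ha b hb) h0 (fun i _ => humem i)
  have hkey : ∀ i, (∃ z ∈ τ, f i z < 0) → f i w < 0 := by
    intro i hex
    have hval : f i (u i) < 0 := by
      rw [hu]; simp only [dif_pos hex]; exact hex.choose_spec.2
    have : f i w = ∑ j, f i (u j) := by rw [hw, map_sum]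
    rw [this, ← Finset.sum_erase_add _ _ (Finset.mem_univ i)]
    have hrest : ∑ j ∈ Finset.univ.erase i, f i (u j) ≤ 0 :=
      Finset.sum_nonpos (fun j _ => (hsub (humem j)) i)
    linarith
  set K : Finset ι := Finset.univ.filter (fun i => ∃ z ∈ τ, f i z < 0) with hK
  set x : E →ₗ[ℝ] ℝ := ∑ i ∈ Finset.univ \ K, -(f i) with hx
  have hxval : ∀ v : E, x v = ∑ i ∈ Finset.univ \ K, -(f i v) := by
    intro v
    rw [hx, LinearMap.sum_apply]
    simp
  have hxnn : ∀ v ∈ hSet f 0, 0 ≤ x v := by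
    intro v hv
    rw [hxval]
    apply Finset.sum_nonneg
    intro i _
    simpa using hv i
  have hzeroK : ∀ i ∈ Finset.univ \ K, ∀ v ∈ τ, f i v = 0 := by
    intro i hi v hv
    have : ¬ ∃ z ∈ τ, f i z < 0 := by
      intro hex
      have : i ∈ K := Finset.mem_filter.mpr ⟨Finset.mem_univ i, hex⟩
      simp [Finset.mem_sdiff] at hi
      exact absurd this hi
    push_neg at this
    exact le_antisymm ((hsub hv) i) (this v hv)
  have hxτ : ∀ v ∈ τ, x v = 0 := by
    intro v hv
    rw [hxval]
    apply Finset.sum_eq_zero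
    intro i hi
    rw [hzeroK i hi v hv, neg_zero]
  refine ⟨x, ?_⟩
  ext v
  constructor
  · intro hv
    refine ⟨hsub hv, fun z hz => ?_⟩
    rw [hxτ v hv]
    exact hxnn z hz
  · intro hv
    -- v ∈ hSet f 0 and x v = 0
    have hv0 : x v = 0 := by
      have h1 := hv.2 0 (zero_mem_hSet0 f)
      rw [map_zero] at h1
      exact le_antisymm h1 (hxnn v hv.1)
    have hzero : ∀ i ∈ Finset.univ \ K, f i v = 0 := by
      have hsum : ∑ i ∈ Finset.univ \ K, -(f i v) = 0 := by rw [← hxval]; exact hv0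
      have := (Finset.sum_eq_zero_iff_of_nonneg
        (fun i (_ : i ∈ Finset.univ \ K) => by simpa using hv.1 i)).mp hsum
      intro i hi
      have := this i hi
      linarith [this]
    -- ε-move
    have hac : ∀ i, f i w < 0 ∨ f i v = 0 := by
      intro i
      by_cases hiK : i ∈ K
      · exact Or.inl (hkey i (Finset.mem_filter.mp hiK).2)
      · exact Or.inr (hzero i (Finset.mem_sdiff.mpr ⟨Finset.mem_univ i, hiK⟩))
    obtain ⟨ε, hε, hεi⟩ := exists_eps (fun i => f i w) (fun i => f i v)
      (fun i => (hsub hwmem) i) (fun i => hv.1 i) hac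
    have hmem : w - ε • v ∈ hSet f 0 := by
      intro i
      have : f i (w - ε • v) = f i w - ε * f i v := by
        rw [map_sub, map_smul, smul_eq_mul]
      rw [this]
      simpa using hεi i
    have hεv : ε • v ∈ hSet f 0 := hSet0_smul hv.1 (le_of_lt hε)
    have hsumτ : (w - ε • v) + ε • v ∈ τ := by
      rw [sub_add_cancel]
      exact hwmem
    have := (hext _ hmem _ hεv hsumτ).2
    have hvτ : v = ε⁻¹ • (ε • v) := by
      rw [smul_smul, inv_mul_cancel₀ (ne_of_gt hε), one_smul]
    rw [hvτ]
    exact hsmul _ this _ (by positivity)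

end Aux2
set_option linter.unusedSectionVars false
set_option maxHeartbeats 1000000
section Aux3

variable {E : Type*} [NormedAddCommGroup E] [NormedSpace ℝ E]

/-- the set of nonnegative combinations of a finite set, matching the form in
`IsPolyhedralCone`. -/
def coneHullSet (F : Finset E) : Set E :=
  {x | ∃ c : E → ℝ, (∀ v, 0 ≤ c v) ∧ x = ∑ v ∈ F, c v • v}

lemma coneHullSet_zero (F : Finset E) : (0:E) ∈ coneHullSet F :=
  ⟨0, fun _ => le_rfl, by simp⟩

lemma coneHullSet_mem {F : Finset E} {v : E} (hv : v ∈ F) : v ∈ coneHullSet F := by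
  classical
  refine ⟨fun w => if v = w then 1 else 0, fun w => by positivity, ?_⟩
  rw [Finset.sum_congr rfl (fun w _ => by
    show (if v = w then (1:ℝ) else 0) • w = if v = w then w else 0
    split <;> simp [*])]
  rw [Finset.sum_ite_eq F v (fun w => w)]
  simp [hv]

lemma coneHullSet_add {F : Finset E} {x y : E}
    (hx : x ∈ coneHullSet F) (hy : y ∈ coneHullSet F) : x + y ∈ coneHullSet F := by
  obtain ⟨c, hc, hcx⟩ := hx
  obtain ⟨d, hd, hdy⟩ := hy
  refine ⟨c + d, fun v => add_nonneg (hc v) (hd v), ?_⟩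
  rw [hcx, hdy, ← Finset.sum_add_distrib]
  congr 1
  ext v
  simp [add_smul]

lemma coneHullSet_smul {F : Finset E} {x : E} {t : ℝ}
    (hx : x ∈ coneHullSet F) (ht : 0 ≤ t) : t • x ∈ coneHullSet F := by
  obtain ⟨c, hc, hcx⟩ := hx
  refine ⟨fun v => t * c v, fun v => mul_nonneg ht (hc v), ?_⟩
  rw [hcx, Finset.smul_sum]
  congr 1
  ext v
  rw [smul_smul]

lemma coneHullSet_sum {F : Finset E} {ι : Type*} (s : Finset ι) (g : ι → E)
    (hg : ∀ i ∈ s, g i ∈ coneHullSet F) : ∑ i ∈ s, g i ∈ coneHullSet F :=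
  Finset.sum_induction g (· ∈ coneHullSet F) (fun _ _ ha hb => coneHullSet_add ha hb)
    (coneHullSet_zero F) hg

lemma coneHullSet_subset {F : Finset E} {S : Set E} (h0 : (0:E) ∈ S)
    (hadd : ∀ a ∈ S, ∀ b ∈ S, a + b ∈ S)
    (hsmul : ∀ a ∈ S, ∀ t : ℝ, 0 ≤ t → t • a ∈ S)
    (hF : (F : Set E) ⊆ S) : coneHullSet F ⊆ S := by
  rintro x ⟨c, hc, hcx⟩
  rw [hcx]
  apply Finset.sum_induction _ (· ∈ S) (fun a b ha hb => hadd a ha b hb) h0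
  intro v hv
  exact hsmul v (hF hv) (c v) (hc v)

/-- base case: the whole space is a polyhedral cone (finite dimension). -/
lemma univ_coneHullSet [FiniteDimensional ℝ E] :
    ∃ F : Finset E, (Set.univ : Set E) = coneHullSet F := by
  classical
  set b := Module.finBasis ℝ E with hb
  set sF : Finset E := Finset.univ.image b with hsF
  refine ⟨sF ∪ sF.image (fun v => -v), ?_⟩
  apply Set.eq_of_subset_of_subset
  · intro x _
    rw [← b.sum_repr x]
    apply coneHullSet_sum
    intro i _
    rcases le_or_gt 0 (b.repr x i) with h | h
    · apply coneHullSet_smul _ h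
      apply coneHullSet_mem
      apply Finset.mem_union_left
      exact Finset.mem_image_of_mem b (Finset.mem_univ i)
    · have : b.repr x i • b i = (-(b.repr x i)) • (-(b i)) := by simp
      rw [this]
      apply coneHullSet_smul _ (by linarith)
      apply coneHullSet_mem
      apply Finset.mem_union_right
      apply Finset.mem_image.mpr
      exact ⟨b i, Finset.mem_image_of_mem b (Finset.mem_univ i), rfl⟩
  · exact fun x _ => trivial

/-- Weyl's theorem for Fin-indexed homogeneous systems. -/
lemma weyl_fin [FiniteDimensional ℝ E] (m : ℕ) (f : Fin m → E →ₗ[ℝ] ℝ) :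
    ∃ F : Finset E, hSet f 0 = coneHullSet F := by
  classical
  induction m with
  | zero =>
      obtain ⟨F, hF⟩ := univ_coneHullSet (E := E)
      refine ⟨F, ?_⟩
      rw [← hF]
      ext u
      simp [hSet]
  | succ m ih =>
      obtain ⟨F, hF⟩ := ih (fun i => f i.castSucc)
      set g : E →ₗ[ℝ] ℝ := f (Fin.last m) with hg
      set q : E → E → E := fun v w => (g v) • w + (-(g w)) • v with hqdef
      set F₁ : Finset E := F.filter (fun v => g v ≤ 0) with hF₁
      set F₂ : Finset E := (F ×ˢ F).image
        (fun p => if 0 < g p.1 ∧ g p.2 ≤ 0 then q p.1 p.2 else 0) with hF₂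
      refine ⟨F₁ ∪ F₂, ?_⟩
      have hsplit : hSet f (0 : Fin (m+1) → ℝ)
          = {x | x ∈ hSet (fun i : Fin m => f i.castSucc) 0 ∧ g x ≤ 0} := by
        ext u
        constructor
        · intro hu
          exact ⟨fun i => hu i.castSucc, hu (Fin.last m)⟩
        · rintro ⟨h1, h2⟩ i
          exact Fin.lastCases h2 h1 i
      rw [hsplit]
      apply Set.eq_of_subset_of_subset
      · rintro x ⟨hxF, hxg⟩
        rw [hF] at hxF
        obtain ⟨c, hc, hcx⟩ := hxF
        set s₁ : Finset E := F.filter (fun v => 0 < g v) with hs₁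
        set s₂ : Finset E := F.filter (fun v => ¬ 0 < g v) with hs₂
        have hFsum : x = (∑ v ∈ s₁, c v • v) + (∑ v ∈ s₂, c v • v) := by
          rw [hcx, hs₁, hs₂, Finset.sum_filter_add_sum_filter_not]
        set A : ℝ := ∑ v ∈ s₁, c v * g v with hA
        set B : ℝ := ∑ w ∈ s₂, c w * (-(g w)) with hB
        have hA0 : 0 ≤ A := Finset.sum_nonneg fun v hv =>
          mul_nonneg (hc v) (le_of_lt (Finset.mem_filter.mp hv).2)
        have hB0 : 0 ≤ B := Finset.sum_nonneg fun v hv =>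
          mul_nonneg (hc v) (by
            have := not_lt.mp (Finset.mem_filter.mp hv).2
            linarith)
        have hgx : g x = A - B := by
          rw [hcx, map_sum]
          rw [show (∑ v ∈ F, g (c v • v)) = ∑ v ∈ F, c v * g v by
            apply Finset.sum_congr rfl; intro v _; rw [map_smul, smul_eq_mul]]
          rw [← Finset.sum_filter_add_sum_filter_not F (fun v => 0 < g v), ← hs₁, ← hs₂]
          have h2 : ∑ x ∈ s₂, c x * g x = -B := by
            rw [hB, ← Finset.sum_neg_distrib]
            apply Finset.sum_congr rfl
            intro w _
            ring
          rw [h2, hA]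
          ring
        have hAB : A ≤ B := by
          have h := hxg
          rw [hgx] at h
          linarith
        by_cases hA0' : A = 0
        · have hczero : ∀ v ∈ s₁, c v = 0 := by
            intro v hv
            have h := (Finset.sum_eq_zero_iff_of_nonneg
              (fun v hv => mul_nonneg (hc v) (le_of_lt (Finset.mem_filter.mp hv).2))).mp
              (by rw [← hA]; exact hA0') v hv
            have hgv : 0 < g v := (Finset.mem_filter.mp hv).2
            rcases mul_eq_zero.mp h with h' | h'
            · exact h'
            · exact absurd h' (ne_of_gt hgv)
          rw [hFsum]
          apply coneHullSet_add
          · rw [Finset.sum_eq_zero (fun v hv => by rw [hczero v hv, zero_smul])]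
            exact coneHullSet_zero _
          · apply coneHullSet_sum
            intro v hv
            apply coneHullSet_smul _ (hc v)
            apply coneHullSet_mem
            apply Finset.mem_union_left
            rw [hF₁]
            refine Finset.mem_filter.mpr ⟨(Finset.mem_filter.mp hv).1, ?_⟩
            exact not_lt.mp (Finset.mem_filter.mp hv).2
        · have hApos : 0 < A := lt_of_le_of_ne hA0 (Ne.symm hA0')
          have hBpos : 0 < B := lt_of_lt_of_le hApos hAB
          set PAIRS : E := ∑ v ∈ s₁, ∑ w ∈ s₂, (c v * c w / B) • q v w with hPAIRS
          have hkey : PAIRS = (A/B) • (∑ w ∈ s₂, c w • w) + ∑ v ∈ s₁, c v • v := by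
            rw [hPAIRS]
            have hsummand : ∀ v ∈ s₁, ∀ w ∈ s₂,
                (c v * c w / B) • q v w
                = (c v * c w / B * g v) • w + (c v * c w / B * (-(g w))) • v := by
              intro v _ w _
              rw [hqdef]
              rw [smul_add, smul_smul, smul_smul]
            rw [Finset.sum_congr rfl (fun v hv =>
              Finset.sum_congr rfl (fun w hw => hsummand v hv w hw))]
            rw [Finset.sum_congr rfl (fun v _ => Finset.sum_add_distrib)]
            rw [Finset.sum_add_distrib]
            congr 1
            · rw [Finset.sum_comm]
              rw [Finset.smul_sum]
              apply Finset.sum_congr rfl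
              intro w _
              rw [← Finset.sum_smul, smul_smul]
              congr 1
              rw [show (∑ v ∈ s₁, c v * c w / B * g v) = (c w / B) * ∑ v ∈ s₁, c v * g v by
                rw [Finset.mul_sum]
                apply Finset.sum_congr rfl
                intro v _
                ring]
              rw [← hA]
              ring
            · apply Finset.sum_congr rfl
              intro v _
              rw [← Finset.sum_smul]
              congr 1
              rw [show (∑ w ∈ s₂, c v * c w / B * (-(g w))) = (c v / B) * ∑ w ∈ s₂, c w * (-(g w)) by
                rw [Finset.mul_sum]
                apply Finset.sum_congr rfl
                intro w _
                ring]
              rw [← hB]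
              field_simp
          have hx2 : x = (1 - A/B) • (∑ w ∈ s₂, c w • w) + PAIRS := by
            rw [hkey, hFsum, sub_smul, one_smul]
            abel
          rw [hx2]
          apply coneHullSet_add
          · apply coneHullSet_smul _ (by
              have : A / B ≤ 1 := (div_le_one hBpos).mpr hAB
              linarith)
            apply coneHullSet_sum
            intro w hw
            apply coneHullSet_smul _ (hc w)
            apply coneHullSet_mem
            apply Finset.mem_union_left
            rw [hF₁]
            exact Finset.mem_filter.mpr ⟨(Finset.mem_filter.mp hw).1,
              not_lt.mp (Finset.mem_filter.mp hw).2⟩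
          · rw [hPAIRS]
            apply coneHullSet_sum
            intro v hv
            apply coneHullSet_sum
            intro w hw
            apply coneHullSet_smul _ (div_nonneg (mul_nonneg (hc v) (hc w)) (le_of_lt hBpos))
            apply coneHullSet_mem
            apply Finset.mem_union_right
            rw [hF₂]
            apply Finset.mem_image.mpr
            refine ⟨(v, w), Finset.mem_product.mpr
              ⟨(Finset.mem_filter.mp hv).1, (Finset.mem_filter.mp hw).1⟩, ?_⟩
            rw [if_pos ⟨(Finset.mem_filter.mp hv).2, not_lt.mp (Finset.mem_filter.mp hw).2⟩]
      · -- generators lie in the target set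
        have htgt0 : (0:E) ∈ {x | x ∈ hSet (fun i : Fin m => f i.castSucc) 0 ∧ g x ≤ 0} :=
          ⟨zero_mem_hSet0 _, by rw [map_zero]⟩
        apply coneHullSet_subset htgt0
        · rintro a ⟨ha1, ha2⟩ b ⟨hb1, hb2⟩
          refine ⟨hSet0_add ha1 hb1, ?_⟩
          rw [map_add]
          linarith
        · rintro a ⟨ha1, ha2⟩ t ht
          refine ⟨hSet0_smul ha1 ht, ?_⟩
          rw [map_smul, smul_eq_mul]
          exact mul_nonpos_of_nonneg_of_nonpos ht ha2
        · intro v hv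
          rcases Finset.mem_union.mp hv with hv | hv
          · rw [hF₁] at hv
            obtain ⟨hvF, hvg⟩ := Finset.mem_filter.mp hv
            refine ⟨?_, hvg⟩
            rw [hF]
            exact coneHullSet_mem hvF
          · rw [hF₂] at hv
            obtain ⟨⟨a, bb⟩, habF, habv⟩ := Finset.mem_image.mp hv
            by_cases hcond : 0 < g a ∧ g bb ≤ 0
            · rw [if_pos hcond] at habv
              subst habv
              obtain ⟨haF, hbF⟩ := Finset.mem_product.mp habF
              have haS : a ∈ hSet (fun i : Fin m => f i.castSucc) 0 := by
                rw [hF]; exact coneHullSet_mem haF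
              have hbS : bb ∈ hSet (fun i : Fin m => f i.castSucc) 0 := by
                rw [hF]; exact coneHullSet_mem hbF
              constructor
              · rw [hqdef]
                exact hSet0_add (hSet0_smul hbS (le_of_lt hcond.1))
                  (hSet0_smul haS (by linarith [hcond.2]))
              · rw [hqdef, map_add, map_smul, map_smul, smul_eq_mul, smul_eq_mul]
                have : g a * g bb + -g bb * g a = 0 := by ring
                linarith [this.le]
            · rw [if_neg hcond] at habv
              subst habv
              exact htgt0

/-- Weyl's theorem, general finite index. -/
lemma weyl [FiniteDimensional ℝ E] {ι : Type*} [Fintype ι] (f : ι → E →ₗ[ℝ] ℝ) :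
    ∃ F : Finset E, hSet f 0 = coneHullSet F := by
  obtain ⟨F, hF⟩ := weyl_fin (Fintype.card ι) (fun j => f ((Fintype.equivFin ι).symm j))
  refine ⟨F, ?_⟩
  rw [← hF]
  ext u
  constructor
  · intro hu j
    exact hu _
  · intro hu i
    have := hu ((Fintype.equivFin ι) i)
    simpa using this

end Aux3
set_option linter.unusedSectionVars false
set_option maxHeartbeats 1000000
section Aux4

variable {E : Type*} [NormedAddCommGroup E] [NormedSpace ℝ E]

/-- homogenization data for a nonhomogeneous system -/
noncomputable def homogMap {ι : Type*} (f : ι → E →ₗ[ℝ] ℝ) (b : ι → ℝ) : ι ⊕ Unit → (E × ℝ) →ₗ[ℝ] ℝ :=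
  Sum.elim (fun i => (f i).comp (LinearMap.fst ℝ E ℝ) - (b i) • (LinearMap.snd ℝ E ℝ))
    (fun _ => -(LinearMap.snd ℝ E ℝ))

lemma homog_mem {ι : Type*} (f : ι → E →ₗ[ℝ] ℝ) (b : ι → ℝ) (u : E) (t : ℝ) :
    (u, t) ∈ hSet (homogMap f b) 0 ↔ (0 ≤ t ∧ ∀ i, f i u ≤ t * b i) := by
  constructor
  · intro h
    constructor
    · have := h (Sum.inr ())
      simp [homogMap] at this
      exact this
    · intro i
      have := h (Sum.inl i)
      simp [homogMap] at this
      linarith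
  · rintro ⟨h1, h2⟩ (i | j)
    · simp [homogMap]
      linarith [h2 i]
    · simp [homogMap]
      exact h1

/-- the fundamental consequence of homogenization: a V-type description. -/
lemma homog_decomp [FiniteDimensional ℝ E] {ι : Type*} [Fintype ι]
    (f : ι → E →ₗ[ℝ] ℝ) (b : ι → ℝ) :
    ∃ G : Finset (E × ℝ),
      (∀ g ∈ G, 0 ≤ g.2 ∧ (g.2 = 0 → g.1 ∈ recPoly (hSet f b))
        ∧ (0 < g.2 → (1/g.2) • g.1 ∈ hSet f b)) ∧
      (∀ u ∈ hSet f b, ∃ c : E × ℝ → ℝ, (∀ v, 0 ≤ c v) ∧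
        u = ∑ g ∈ G, c g • g.1 ∧ (∑ g ∈ G, c g * g.2) = 1) := by
  obtain ⟨G, hG⟩ := weyl (homogMap f b)
  refine ⟨G, ?_, ?_⟩
  · intro g hg
    have hgC : g ∈ hSet (homogMap f b) 0 := by
      rw [hG]; exact coneHullSet_mem hg
    have hgC' : (g.1, g.2) ∈ hSet (homogMap f b) 0 := by
      simpa using hgC
    rw [homog_mem] at hgC'
    refine ⟨hgC'.1, ?_, ?_⟩
    · intro h0
      intro z hz i
      have h2 := hgC'.2 i
      rw [h0, zero_mul] at h2
      have := hz i
      have he : f i (z + g.1) = f i z + f i g.1 := map_add _ _ _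
      rw [he]; linarith
    · intro hpos
      have hsc : (1/g.2) • g ∈ hSet (homogMap f b) 0 :=
        hSet0_smul hgC (by positivity)
      have : ((1/g.2) • g.1, (1/g.2) * g.2) ∈ hSet (homogMap f b) 0 := by
        have he : ((1/g.2) • g.1, (1/g.2) * g.2) = (1/g.2) • g := by
          ext
          · simp
          · simp
        rwa [he]
      rw [one_div_mul_cancel (ne_of_gt hpos)] at this
      rw [homog_mem] at this
      intro i
      have := this.2 i
      linarith
  · intro u hu
    have huC : (u, (1:ℝ)) ∈ hSet (homogMap f b) 0 := by
      rw [homog_mem]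
      exact ⟨zero_le_one, fun i => by rw [one_mul]; exact hu i⟩
    rw [hG] at huC
    obtain ⟨c, hc, hcu⟩ := huC
    refine ⟨c, hc, ?_, ?_⟩
    · have := congrArg Prod.fst hcu
      rw [Prod.fst_sum] at this
      simpa using this
    · have := congrArg Prod.snd hcu
      rw [Prod.snd_sum] at this
      simp only [Prod.smul_snd, smul_eq_mul] at this
      exact this.symm

/-- attainment: a functional nonnegative on the recession cone attains its
minimum on a nonempty H-polyhedron. -/
lemma attain [FiniteDimensional ℝ E] {ι : Type*} [Fintype ι]
    (f : ι → E →ₗ[ℝ] ℝ) (b : ι → ℝ) (hne : (hSet f b).Nonempty) (x : E →ₗ[ℝ] ℝ)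
    (hx : ∀ v ∈ recPoly (hSet f b), 0 ≤ x v) :
    ∃ p ∈ hSet f b, ∀ v ∈ hSet f b, x p ≤ x v := by
  classical
  obtain ⟨G, hGprop, hGdec⟩ := homog_decomp f b
  set V : Finset (E × ℝ) := G.filter (fun g => 0 < g.2) with hV
  have hVne : V.Nonempty := by
    obtain ⟨u₀, hu₀⟩ := hne
    obtain ⟨c, hc, hcu, hcs⟩ := hGdec u₀ hu₀
    by_contra hemp
    have : ∀ g ∈ G, c g * g.2 = 0 := by
      intro g hg
      by_cases h2 : 0 < g.2
      · exact absurd ⟨g, Finset.mem_filter.mpr ⟨hg, h2⟩⟩ hemp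
      · have : g.2 = 0 := le_antisymm (not_lt.mp h2) (hGprop g hg).1
        rw [this, mul_zero]
    rw [Finset.sum_eq_zero this] at hcs
    exact zero_ne_one hcs
  obtain ⟨g₀, hg₀V, hg₀min⟩ := Finset.exists_min_image V (fun g => (1/g.2) * x g.1) hVne
  have hg₀G := (Finset.mem_filter.mp hg₀V).1
  have hg₀pos := (Finset.mem_filter.mp hg₀V).2
  refine ⟨(1/g₀.2) • g₀.1, (hGprop g₀ hg₀G).2.2 hg₀pos, ?_⟩
  intro u hu
  obtain ⟨c, hc, hcu, hcs⟩ := hGdec u hu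
  have hxu : x u = ∑ g ∈ G, c g * x g.1 := by
    rw [hcu, map_sum]
    apply Finset.sum_congr rfl
    intro g _
    rw [map_smul, smul_eq_mul]
  have hxp : x ((1/g₀.2) • g₀.1) = (1/g₀.2) * x g₀.1 := by
    rw [map_smul, smul_eq_mul]
  set q₀ : ℝ := (1/g₀.2) * x g₀.1 with hq₀
  have hterm : ∀ g ∈ G, (c g * g.2) * q₀ ≤ c g * x g.1 := by
    intro g hg
    by_cases h2 : 0 < g.2
    · have hmin : q₀ ≤ (1/g.2) * x g.1 := hg₀min g (Finset.mem_filter.mpr ⟨hg, h2⟩)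
      have h4 : g.2 * (1/g.2 * x g.1) = x g.1 := by
        field_simp
      calc (c g * g.2) * q₀ = c g * (g.2 * q₀) := by ring
        _ ≤ c g * (g.2 * (1/g.2 * x g.1)) := by
            apply mul_le_mul_of_nonneg_left _ (hc g)
            exact mul_le_mul_of_nonneg_left hmin (le_of_lt h2)
        _ = c g * x g.1 := by rw [h4]
    · have h0 : g.2 = 0 := le_antisymm (not_lt.mp h2) (hGprop g hg).1
      have : 0 ≤ x g.1 := hx g.1 ((hGprop g hg).2.1 h0)
      rw [h0, mul_zero, zero_mul]
      exact mul_nonneg (hc g) this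
  rw [hxp]
  calc q₀ = (∑ g ∈ G, c g * g.2) * q₀ := by rw [hcs, one_mul]
    _ = ∑ g ∈ G, (c g * g.2) * q₀ := by rw [Finset.sum_mul]
    _ ≤ ∑ g ∈ G, c g * x g.1 := Finset.sum_le_sum hterm
    _ = x u := hxu.symm

/-- an H-polyhedron with trivial recession cone is bounded. -/
lemma bounded_of_recPoly_trivial [FiniteDimensional ℝ E] {ι : Type*} [Fintype ι]
    (f : ι → E →ₗ[ℝ] ℝ) (b : ι → ℝ) (hrec : recPoly (hSet f b) ⊆ {0}) :
    ∃ R : ℝ, ∀ y ∈ hSet f b, ‖y‖ ≤ R := by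
  classical
  obtain ⟨G, hGprop, hGdec⟩ := homog_decomp f b
  set V : Finset (E × ℝ) := G.filter (fun g => 0 < g.2) with hV
  obtain ⟨K, hK⟩ := (V.image (fun g => ‖g.1‖ / g.2)).finite_toSet.bddAbove
  refine ⟨K, ?_⟩
  intro y hy
  obtain ⟨c, hc, hcy, hcs⟩ := hGdec y hy
  have hoffV : ∀ g ∈ G, ¬ 0 < g.2 → c g • g.1 = 0 := by
    intro g hg h2
    have h0 : g.2 = 0 := le_antisymm (not_lt.mp h2) (hGprop g hg).1
    have : g.1 ∈ recPoly (hSet f b) := (hGprop g hg).2.1 h0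
    have := hrec this
    simp at this
    rw [this, smul_zero]
  have hyV : y = ∑ g ∈ V, c g • g.1 := by
    rw [hcy, hV]
    rw [← Finset.sum_filter_add_sum_filter_not G (fun g => 0 < g.2)]
    rw [Finset.sum_eq_zero (fun g hg => hoffV g (Finset.mem_filter.mp hg).1
      (Finset.mem_filter.mp hg).2), add_zero]
  have hsumV : ∑ g ∈ V, c g * g.2 = 1 := by
    have h0 : ∑ g ∈ G.filter (fun g => ¬ 0 < g.2), c g * g.2 = 0 :=
      Finset.sum_eq_zero (fun g hg => by
        have h0' : g.2 = 0 := le_antisymm (not_lt.mp (Finset.mem_filter.mp hg).2)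
          (hGprop g (Finset.mem_filter.mp hg).1).1
        rw [h0', mul_zero])
    rw [← hcs, ← Finset.sum_filter_add_sum_filter_not G (fun g => 0 < g.2), h0, add_zero, hV]
  calc ‖y‖ ≤ ∑ g ∈ V, ‖c g • g.1‖ := by rw [hyV]; exact norm_sum_le _ _
    _ ≤ ∑ g ∈ V, (c g * g.2) * K := by
        apply Finset.sum_le_sum
        intro g hg
        have hpos := (Finset.mem_filter.mp hg).2
        have hKg : ‖g.1‖ / g.2 ≤ K := hK (Finset.mem_coe.mpr
          (Finset.mem_image_of_mem _ hg))
        have h1 : ‖g.1‖ ≤ K * g.2 := by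
          rw [div_le_iff₀ hpos] at hKg
          linarith
        rw [norm_smul, Real.norm_eq_abs, abs_of_nonneg (hc g)]
        calc c g * ‖g.1‖ ≤ c g * (K * g.2) :=
              mul_le_mul_of_nonneg_left h1 (hc g)
          _ = (c g * g.2) * K := by ring
    _ = (∑ g ∈ V, c g * g.2) * K := by rw [Finset.sum_mul]
    _ = K := by rw [hsumV, one_mul]

end Aux4
set_option linter.unusedSectionVars false
set_option maxHeartbeats 1000000
section Aux5
open Relation

variable {E : Type*} [NormedAddCommGroup E] [NormedSpace ℝ E]

/-- chain connectivity through a finite closed cover of a preconnected set -/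
lemma conn_chain {α : Type*} [TopologicalSpace α] {S : Set α} (hS : IsPreconnected S)
    {ι : Type*} (s : Finset ι) (C : ι → Set α) (hcl : ∀ i ∈ s, IsClosed (C i))
    (hcov : S ⊆ ⋃ i ∈ s, C i) {a b : ι} (ha : a ∈ s) (hb : b ∈ s)
    (hSa : (S ∩ C a).Nonempty) (hSb : (S ∩ C b).Nonempty) :
    Relation.ReflTransGen (fun i j => i ∈ s ∧ j ∈ s ∧ (S ∩ C i ∩ C j).Nonempty) a b := by
  classical
  set R := fun i j => i ∈ s ∧ j ∈ s ∧ (S ∩ C i ∩ C j).Nonempty with hR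
  by_contra hnot
  set sU := s.filter (fun i => Relation.ReflTransGen R a i) with hsU
  set sV := s.filter (fun i => ¬ Relation.ReflTransGen R a i) with hsV
  set U := ⋃ i ∈ sU, C i with hU
  set V := ⋃ i ∈ sV, C i with hV
  have hclU : IsClosed U :=
    Set.Finite.isClosed_biUnion (sU.finite_toSet)
      (fun i hi => hcl i (Finset.mem_filter.mp hi).1)
  have hclV : IsClosed V :=
    Set.Finite.isClosed_biUnion (sV.finite_toSet)
      (fun i hi => hcl i (Finset.mem_filter.mp hi).1)
  have hcover : S ⊆ U ∪ V := by
    intro y hy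
    obtain ⟨i, hi, hyi⟩ := Set.mem_iUnion₂.mp (hcov hy)
    by_cases hri : Relation.ReflTransGen R a i
    · left; exact Set.mem_biUnion (Finset.mem_filter.mpr ⟨hi, hri⟩) hyi
    · right; exact Set.mem_biUnion (Finset.mem_filter.mpr ⟨hi, hri⟩) hyi
  have hSU : (S ∩ U).Nonempty := by
    obtain ⟨y, hyS, hya⟩ := hSa
    exact ⟨y, hyS, Set.mem_biUnion (Finset.mem_filter.mpr ⟨ha, Relation.ReflTransGen.refl⟩) hya⟩
  have hSV : (S ∩ V).Nonempty := by
    obtain ⟨y, hyS, hyb⟩ := hSb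
    exact ⟨y, hyS, Set.mem_biUnion (Finset.mem_filter.mpr ⟨hb, hnot⟩) hyb⟩
  obtain ⟨zz, hzS, hzU, hzV⟩ := isPreconnected_closed_iff.mp hS U V hclU hclV hcover hSU hSV
  obtain ⟨i, hi, hzi⟩ := Set.mem_iUnion₂.mp hzU
  obtain ⟨j, hj, hzj⟩ := Set.mem_iUnion₂.mp hzV
  have hij : R i j := ⟨(Finset.mem_filter.mp hi).1, (Finset.mem_filter.mp hj).1,
    ⟨zz, ⟨hzS, hzi⟩, hzj⟩⟩
  exact (Finset.mem_filter.mp hj).2 ((Finset.mem_filter.mp hi).2.tail hij)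

/-- `Δ` eventually absorbs the `w`-ray starting at `p`. -/
def Good (P : Set (Set E)) (w p : E) (Δ : Set E) : Prop :=
  Δ ∈ P ∧ w ∈ recPoly Δ ∧ ∃ T : ℝ, 0 ≤ T ∧ ∀ t : ℝ, T ≤ t → p + t • w ∈ Δ

/-- adjacency within the `w`-absorbing part of the complex -/
def adjW (P : Set (Set E)) (w : E) (Δ Δ' : Set E) : Prop :=
  Δ ∈ P ∧ Δ' ∈ P ∧ w ∈ recPoly Δ ∧ w ∈ recPoly Δ' ∧ (Δ ∩ Δ').Nonempty

lemma adjW_symm {P : Set (Set E)} {w : E} : Symmetric (adjW P w) := by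
  rintro X Y ⟨h1, h2, h3, h4, h5⟩
  exact ⟨h2, h1, h4, h3, by rwa [Set.inter_comm]⟩

lemma good_good_adjW {P : Set (Set E)} {w p : E} {A B : Set E}
    (hA : Good P w p A) (hB : Good P w p B) : adjW P w A B := by
  obtain ⟨hAP, hAw, TA, hTA0, hTA⟩ := hA
  obtain ⟨hBP, hBw, TB, hTB0, hTB⟩ := hB
  exact ⟨hAP, hBP, hAw, hBw, ⟨p + (max TA TB) • w,
    hTA _ (le_max_left _ _), hTB _ (le_max_right _ _)⟩⟩

lemma mem_convex_of_hSet {Δ : Set E} (h : IsPolyhedron Δ) : Convex ℝ Δ := by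
  obtain ⟨m, f, b, hform⟩ := h
  have : Δ = hSet f b := hform
  rw [this]
  exact convex_hSet f b

/-- existence of an absorber for a ray inside the support -/
lemma absorber_exists {P : Set (Set E)} (hPfin : P.Finite)
    (hpoly : ∀ S ∈ P, IsPolyhedron S ∧ S.Nonempty) {w p : E}
    (hray : ∀ t : ℝ, 0 ≤ t → p + t • w ∈ polySupport P) :
    ∃ Δ, Good P w p Δ := by
  classical
  set I : Set E → Set ℝ := fun Δ => {t | 0 ≤ t ∧ p + t • w ∈ Δ} with hI
  have hcov : Set.Ici (0:ℝ) ⊆ ⋃ Δ ∈ P, I Δ := by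
    intro t ht
    obtain ⟨Δ, hΔ, hmem⟩ := Set.mem_iUnion₂.mp (hray t ht)
    exact Set.mem_biUnion hΔ ⟨ht, hmem⟩
  have : ¬ ∀ Δ ∈ P, BddAbove (I Δ) := by
    intro hall
    have : BddAbove (⋃ Δ ∈ P, I Δ) := (Set.Finite.bddAbove_biUnion hPfin).mpr hall
    exact not_bddAbove_Ici (0:ℝ) (this.mono hcov)
  push_neg at this
  obtain ⟨Δ, hΔP, hΔub⟩ := this
  have hne : (I Δ).Nonempty := by
    by_contra hemp
    rw [Set.not_nonempty_iff_eq_empty] at hemp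
    rw [hemp] at hΔub
    exact hΔub bddAbove_empty
  obtain ⟨t₀, ht₀⟩ := hne
  have hconv : Convex ℝ Δ := mem_convex_of_hSet (hpoly Δ hΔP).1
  have htail : ∀ t : ℝ, t₀ ≤ t → p + t • w ∈ Δ := by
    intro t ht
    obtain ⟨t₁, ht₁I, ht₁gt⟩ := (not_bddAbove_iff).mp hΔub t
    have ht01 : t₀ ≤ t₁ := le_trans ht (le_of_lt ht₁gt)
    rcases eq_or_lt_of_le ht01 with heq | hlt
    · -- t₀ = t₁ so t = t₀
      have : t = t₀ := le_antisymm (heq ▸ le_of_lt ht₁gt) ht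
      rw [this]; exact ht₀.2
    · set lam : ℝ := (t - t₀) / (t₁ - t₀) with hlam
      have hl0 : 0 ≤ lam := by
        apply div_nonneg <;> linarith
      have hl1 : lam ≤ 1 := by
        rw [hlam, div_le_one (by linarith)]
        linarith
      have hco := hconv ht₀.2 ht₁I.2 (by linarith : (0:ℝ) ≤ 1 - lam) hl0 (by ring)
      have hrewrite : (1 - lam) • (p + t₀ • w) + lam • (p + t₁ • w) = p + t • w := by
        have hne' : t₁ - t₀ ≠ 0 := ne_of_gt (by linarith)
        have hl : lam * (t₁ - t₀) = t - t₀ := by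
          rw [hlam]; exact div_mul_cancel₀ _ hne'
        have hteq : (1 - lam) * t₀ + lam * t₁ = t := by nlinarith [hl]
        rw [← hteq]
        module
      rwa [hrewrite] at hco
  obtain ⟨m, f, b, hform⟩ := (hpoly Δ hΔP).1
  refine ⟨Δ, hΔP, ?_, t₀, ht₀.1, htail⟩
  rw [hform]
  apply ray_mem_recPoly (p := p + t₀ • w)
  intro s hs
  have : p + t₀ • w + s • w = p + (t₀ + s) • w := by module
  rw [this]
  have := htail (t₀ + s) (by linarith)
  rwa [hform] at this

/-- the strip lemma: absorbers of the two endpoints of a segment inside the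
support are connected in the `w`-absorbing adjacency graph. -/
lemma strip_lemma {P : Set (Set E)} (hPfin : P.Finite)
    (hpoly : ∀ S ∈ P, IsPolyhedron S ∧ S.Nonempty) {w : E}
    (hray : ∀ p ∈ polySupport P, ∀ t : ℝ, 0 ≤ t → p + t • w ∈ polySupport P)
    {z z' : E} (hseg : ∀ θ : ℝ, θ ∈ Set.Icc (0:ℝ) 1 → z + θ • (z' - z) ∈ polySupport P)
    {A B : Set E} (hA : Good P w z A) (hB : Good P w z' B) :
    Relation.ReflTransGen (adjW P w) A B := by
  classical
  obtain ⟨hAP, hAw, TA, hTA0, hTA⟩ := hA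
  obtain ⟨hBP, hBw, TB, hTB0, hTB⟩ := hB
  set Lψ : (ℝ × ℝ) →ₗ[ℝ] E :=
    (LinearMap.fst ℝ ℝ ℝ).smulRight (z' - z) + (LinearMap.snd ℝ ℝ ℝ).smulRight w with hLψ
  have hLψval : ∀ y : ℝ × ℝ, Lψ y = y.1 • (z' - z) + y.2 • w := by
    intro y
    rw [hLψ]
    simp [LinearMap.smulRight_apply]
  set ψ : ℝ × ℝ → E := fun y => z + Lψ y with hψ
  have hψval : ∀ y : ℝ × ℝ, ψ y = z + y.1 • (z' - z) + y.2 • w := by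
    intro y
    show z + Lψ y = _
    rw [hLψval]
    abel
  set J : Set E → Set (ℝ × ℝ) :=
    fun Δ => {y | y.1 ∈ Set.Icc (0:ℝ) 1 ∧ 0 ≤ y.2 ∧ ψ y ∈ Δ} with hJ
  -- H-presentation of J Δ
  have hJform : ∀ Δ ∈ P, ∃ (k : ℕ) (g : Fin k ⊕ Fin 3 → (ℝ × ℝ) →ₗ[ℝ] ℝ)
      (cb : Fin k ⊕ Fin 3 → ℝ), J Δ = hSet g cb
      ∧ ∀ d ∈ hSet g (0 : Fin k ⊕ Fin 3 → ℝ), d.1 = 0 ∧ 0 ≤ d.2 := by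
    intro Δ hΔ
    obtain ⟨m, f, b, hform⟩ := (hpoly Δ hΔ).1
    refine ⟨m, Sum.elim (fun i => (f i).comp Lψ)
      ![LinearMap.fst ℝ ℝ ℝ, -(LinearMap.fst ℝ ℝ ℝ), -(LinearMap.snd ℝ ℝ ℝ)],
      Sum.elim (fun i => b i - f i z) ![1, 0, 0], ?_, ?_⟩
    case refine_2 =>
      intro d hd
      have h1 := hd (Sum.inr 0)
      have h2 := hd (Sum.inr 1)
      have h3 := hd (Sum.inr 2)
      simp at h1 h2 h3
      exact ⟨le_antisymm h1 h2, h3⟩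
    ext y
    constructor
    · rintro ⟨⟨hy1a, hy1b⟩, hy2, hyΔ⟩
      rw [hform] at hyΔ
      rintro (i | j)
      · have := hyΔ i
        rw [hψ] at this
        simp only [Sum.elim_inl, LinearMap.comp_apply]
        have he : f i (z + Lψ y) = f i z + f i (Lψ y) := map_add _ _ _
        rw [he] at this
        linarith
      · fin_cases j <;> simp <;> linarith
    · intro hy
      have h1 := hy (Sum.inr 0)
      have h2 := hy (Sum.inr 1)
      have h3 := hy (Sum.inr 2)
      simp at h1 h2 h3
      refine ⟨⟨h2, h1⟩, h3, ?_⟩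
      rw [hform]
      intro i
      have := hy (Sum.inl i)
      simp only [Sum.elim_inl, LinearMap.comp_apply] at this
      rw [hψ]
      have he : f i (z + Lψ y) = f i z + f i (Lψ y) := map_add _ _ _
      rw [he]
      linarith
  -- vertical boundedness of non-absorbers
  have hbd : ∀ Δ ∈ P, w ∉ recPoly Δ → BddAbove (Prod.snd '' J Δ) := by
    intro Δ hΔ hw
    obtain ⟨k, g, cb, hJf, hg0⟩ := hJform Δ hΔ
    by_cases hne : (J Δ).Nonempty
    · by_cases hrec : recPoly (J Δ) ⊆ {0}
      · obtain ⟨R, hR⟩ := bounded_of_recPoly_trivial g cb (by rwa [← hJf])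
        refine ⟨R, ?_⟩
        rintro r ⟨y, hyJ, rfl⟩
        calc y.2 ≤ |y.2| := le_abs_self _
          _ ≤ ‖y‖ := by rw [← Real.norm_eq_abs]; exact norm_snd_le y
          _ ≤ R := hR y (by rwa [← hJf])
      · exfalso
        apply hw
        rw [Set.not_subset] at hrec
        obtain ⟨d, hdrec, hdne⟩ := hrec
        have hd0 : d ∈ hSet g 0 := by
          rw [hJf] at hdrec
          rwa [recPoly_hSet g cb (by rwa [hJf] at hne)] at hdrec
        obtain ⟨hd1', hd3⟩ := hg0 d hd0
        have hd2' : 0 < d.2 := by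
          rcases lt_or_eq_of_le hd3 with h | h
          · exact h
          · exfalso
            apply hdne
            have : d = (0 : ℝ × ℝ) := Prod.ext hd1' h.symm
            simp [this]
        obtain ⟨y₀, hy₀⟩ := hne
        obtain ⟨m, f, b, hform⟩ := (hpoly Δ hΔ).1
        rw [hform]
        apply ray_mem_recPoly (p := ψ y₀)
        intro t ht
        have hyt : y₀ + (t / d.2) • d ∈ J Δ := by
          rw [hJf]
          apply recPoly_ray _ _ (div_nonneg ht (le_of_lt hd2'))
          · rw [hJf] at hdrec; exact hdrec
          · rw [hJf] at hy₀; exact hy₀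
        have hd2c : (t / d.2) * d.2 = t := div_mul_cancel₀ t (ne_of_gt hd2')
        have hψeq : ψ (y₀ + (t / d.2) • d) = ψ y₀ + t • w := by
          rw [hψval, hψval]
          have h1 : (y₀ + (t / d.2) • d).1 = y₀.1 + (t/d.2) * d.1 := rfl
          have h2 : (y₀ + (t / d.2) • d).2 = y₀.2 + (t/d.2) * d.2 := rfl
          rw [h1, h2, hd1', hd2c, mul_zero, add_zero, add_smul]
          abel
        have := hyt.2.2
        rwa [hψeq, hform] at this
    · rw [Set.not_nonempty_iff_eq_empty] at hne
      rw [hne]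
      simp
  -- a uniform height above which only absorbers appear
  set Bad : Finset (Set E) := hPfin.toFinset.filter (fun Δ => w ∉ recPoly Δ) with hBad
  have hbdU : BddAbove (⋃ Δ ∈ Bad, Prod.snd '' J Δ) := by
    apply (Set.Finite.bddAbove_biUnion (Bad.finite_toSet)).mpr
    intro Δ hΔ
    have h1 := Finset.mem_filter.mp hΔ
    exact hbd Δ (hPfin.mem_toFinset.mp h1.1) h1.2
  obtain ⟨M, hM⟩ := hbdU
  set T : ℝ := max (max TA TB) (max M 0 + 1) with hT
  have hT0 : 0 ≤ T := le_trans (by positivity) (le_max_right _ _)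
  have hTgood : ∀ Δ ∈ P, ∀ y ∈ J Δ, y.2 = T → w ∈ recPoly Δ := by
    intro Δ hΔ y hy hy2
    by_contra hw
    have hmem : y.2 ∈ ⋃ Δ ∈ Bad, Prod.snd '' J Δ := by
      apply Set.mem_biUnion (Finset.mem_filter.mpr ⟨hPfin.mem_toFinset.mpr hΔ, hw⟩)
      exact ⟨y, hy, rfl⟩
    have := hM hmem
    rw [hy2] at this
    have hTM : max M 0 + 1 ≤ T := le_max_right _ _
    have : T ≤ M := this
    have : max M 0 + 1 ≤ M := le_trans hTM this
    have : M + 1 ≤ M := le_trans (by linarith [le_max_left M (0:ℝ)]) this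
    linarith
  -- the horizontal segment at height T
  set ST : Set (ℝ × ℝ) := Set.Icc (0:ℝ) 1 ×ˢ ({T} : Set ℝ) with hST
  have hSTconn : IsPreconnected ST :=
    (Convex.prod (convex_Icc 0 1) (convex_singleton T)).isPreconnected
  have hSTcov : ST ⊆ ⋃ Δ ∈ hPfin.toFinset, J Δ := by
    rintro y ⟨hy1, hy2⟩
    simp only [Set.mem_singleton_iff] at hy2
    have hψy : ψ y ∈ polySupport P := by
      have h1 : z + y.1 • (z' - z) ∈ polySupport P := hseg y.1 hy1
      have := hray _ h1 y.2 (by rw [hy2]; exact hT0)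
      have he : z + y.1 • (z' - z) + y.2 • w = ψ y := (hψval y).symm
      rwa [he] at this
    obtain ⟨Δ, hΔ, hmem⟩ := Set.mem_iUnion₂.mp hψy
    apply Set.mem_biUnion (hPfin.mem_toFinset.mpr hΔ)
    exact ⟨hy1, by rw [hy2]; exact hT0, hmem⟩
  have hSTclosed : ∀ Δ ∈ hPfin.toFinset, IsClosed (J Δ) := by
    intro Δ hΔ
    obtain ⟨k, g, cb, hJf, -⟩ := hJform Δ (hPfin.mem_toFinset.mp hΔ)
    rw [hJf]
    exact isClosed_hSet g cb
  have hSTA : (ST ∩ J A).Nonempty := by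
    refine ⟨(0, T), ⟨⟨le_rfl, zero_le_one⟩, rfl⟩, ⟨⟨le_rfl, zero_le_one⟩, hT0, ?_⟩⟩
    have he : ψ (0, T) = z + T • w := by
      rw [hψval]
      simp
    rw [he]
    exact hTA T (le_trans (le_max_left _ _) (le_max_left _ _))
  have hSTB : (ST ∩ J B).Nonempty := by
    refine ⟨(1, T), ⟨⟨zero_le_one, le_rfl⟩, rfl⟩, ⟨⟨zero_le_one, le_rfl⟩, hT0, ?_⟩⟩
    have he : ψ (1, T) = z' + T • w := by
      rw [hψval]
      show z + (1:ℝ) • (z' - z) + T • w = z' + T • w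
      rw [one_smul]
      abel
    rw [he]
    exact hTB T (le_trans (le_max_right _ _) (le_max_left _ _))
  have hchain := conn_chain hSTconn hPfin.toFinset J hSTclosed hSTcov
    (hPfin.mem_toFinset.mpr hAP) (hPfin.mem_toFinset.mpr hBP) hSTA hSTB
  apply Relation.ReflTransGen.mono _ A B hchain
  rintro X Y ⟨hXs, hYs, ⟨y, ⟨hyST, hyX⟩, hyY⟩⟩
  have hXP := hPfin.mem_toFinset.mp hXs
  have hYP := hPfin.mem_toFinset.mp hYs
  have hy2 : y.2 = T := by
    obtain ⟨-, h2⟩ := hyST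
    simpa using h2
  exact ⟨hXP, hYP, hTgood X hXP y hyX hy2, hTgood Y hYP y hyY hy2,
    ⟨ψ y, hyX.2.2, hyY.2.2⟩⟩

end Aux5
set_option linter.unusedSectionVars false
set_option maxHeartbeats 1000000
section Aux6
open Relation

variable {E : Type*} [NormedAddCommGroup E] [NormedSpace ℝ E]

lemma chain_claim [FiniteDimensional ℝ E] {P : Set (Set E)} (hP : IsPolyComplex P)
    (hMW : MWCondition (polySupport P)) (hconn : IsConnected (polySupport P))
    {w : E} {Λ Γ : Set E} (hΛ : Λ ∈ P) (hΓ : Γ ∈ P)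
    (hwΛ : w ∈ recPoly Λ) (hwΓ : w ∈ recPoly Γ) :
    Relation.ReflTransGen (adjW P w) Λ Γ := by
  classical
  obtain ⟨hPne, hPfin, hpoly, hfaces, hpair⟩ := hP
  have hsub : ∀ Δ ∈ P, Δ ⊆ polySupport P := fun Δ hΔ x hx => Set.mem_biUnion hΔ hx
  have hmemray : ∀ Δ ∈ P, w ∈ recPoly Δ → ∀ q ∈ Δ, Good P w q Δ := by
    intro Δ hΔ hwΔ q hq
    obtain ⟨m, f, b, hform⟩ := (hpoly Δ hΔ).1
    refine ⟨hΔ, hwΔ, 0, le_rfl, fun t ht => ?_⟩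
    rw [hform]
    exact recPoly_ray (by rwa [hform] at hwΔ) (by rwa [hform] at hq) ht
  have hw0 : w ∈ recSet (polySupport P) := by
    obtain ⟨p₀, hp₀⟩ := (hpoly Λ hΛ).2
    obtain ⟨m, f, b, hform⟩ := (hpoly Λ hΛ).1
    have h1 : w ∈ locRec (polySupport P) p₀ := by
      intro t ht
      apply hsub Λ hΛ
      rw [hform]
      exact recPoly_ray (by rwa [hform] at hwΛ) (by rwa [hform] at hp₀) ht
    rw [hMW p₀ (hsub Λ hΛ hp₀)] at h1
    exact h1
  have hray : ∀ p ∈ polySupport P, ∀ t : ℝ, 0 ≤ t → p + t • w ∈ polySupport P := by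
    intro p hp
    have h1 : w ∈ locRec (polySupport P) p := by
      rw [hMW p hp]
      exact hw0
    exact h1
  have hclosed : ∀ Δ ∈ hPfin.toFinset, IsClosed Δ := by
    intro Δ hΔ
    obtain ⟨m, f, b, hform⟩ := (hpoly Δ (hPfin.mem_toFinset.mp hΔ)).1
    rw [show Δ = hSet f b from hform]
    exact isClosed_hSet f b
  have hcov : polySupport P ⊆ ⋃ Δ ∈ hPfin.toFinset, Δ := by
    intro p hp
    obtain ⟨Δ, hΔ, hmem⟩ := Set.mem_iUnion₂.mp hp
    exact Set.mem_biUnion (hPfin.mem_toFinset.mpr hΔ) hmem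
  obtain ⟨pΛ, hpΛ⟩ := (hpoly Λ hΛ).2
  obtain ⟨pΓ, hpΓ⟩ := (hpoly Γ hΓ).2
  have hbase := conn_chain hconn.isPreconnected hPfin.toFinset (fun Δ => Δ) hclosed hcov
    (hPfin.mem_toFinset.mpr hΛ) (hPfin.mem_toFinset.mpr hΓ)
    ⟨pΛ, hsub Λ hΛ hpΛ, hpΛ⟩ ⟨pΓ, hsub Γ hΓ hpΓ, hpΓ⟩
  have main : ∀ X, Relation.ReflTransGen
      (fun i j => i ∈ hPfin.toFinset ∧ j ∈ hPfin.toFinset ∧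
        (polySupport P ∩ (fun Δ => Δ) i ∩ (fun Δ => Δ) j).Nonempty) Λ X →
      ∀ q ∈ X, ∀ Bb, Good P w q Bb → Relation.ReflTransGen (adjW P w) Λ Bb := by
    intro X hX
    induction hX with
    | refl =>
        intro q hq Bb hBb
        exact Relation.ReflTransGen.single (good_good_adjW (hmemray Λ hΛ hwΛ q hq) hBb)
    | @tail X' Y' hab hbc ih =>
        intro q hq Bb hBb
        obtain ⟨hXs, hYs, ⟨sPt, ⟨hsS, hsX⟩, hsY⟩⟩ := hbc
        obtain ⟨Aa, hAa⟩ := absorber_exists hPfin hpoly (hray sPt hsS)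
        have h1 := ih sPt hsX Aa hAa
        have hYP := hPfin.mem_toFinset.mp hYs
        have hconvY : Convex ℝ Y' := mem_convex_of_hSet (hpoly Y' hYP).1
        have hseg : ∀ θ : ℝ, θ ∈ Set.Icc (0:ℝ) 1 → sPt + θ • (q - sPt) ∈ polySupport P := by
          intro θ hθ
          apply hsub Y' hYP
          have h2 := hconvY hsY hq (by linarith [hθ.2] : (0:ℝ) ≤ 1 - θ) hθ.1 (by ring)
          have heq : (1 - θ) • sPt + θ • q = sPt + θ • (q - sPt) := by module
          rwa [heq] at h2
        exact h1.trans (strip_lemma hPfin hpoly hray hseg hAa hBb)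
  exact main Γ hbase pΓ hpΓ Γ (hmemray Γ hΓ hwΓ pΓ hpΓ)

/-- a single step of the propagation argument -/
lemma edge_step {P : Set (Set E)} (hpoly : ∀ S ∈ P, IsPolyhedron S ∧ S.Nonempty)
    (hpair : ∀ S ∈ P, ∀ T ∈ P, (S ∩ T).Nonempty → IsFaceOf (S ∩ T) S ∧ IsFaceOf (S ∩ T) T)
    {w : E} {τ : Set E}
    (hrel : ∀ x : E →ₗ[ℝ] ℝ, (∀ u ∈ τ, 0 ≤ x u) → x w = 0 → ∀ v ∈ τ, x v = 0)
    {A B : Set E} (hadj : adjW P w A B) (hτA : τ ⊆ recPoly A)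
    (yy zz : E) (hy : yy ∈ recPoly A) (hz : zz ∈ recPoly A) (hyz : yy + zz ∈ τ) :
    τ ⊆ recPoly B ∧ yy ∈ recPoly B ∧ zz ∈ recPoly B := by
  obtain ⟨hAP, hBP, hwA, hwB, hABne⟩ := hadj
  obtain ⟨hne1, x, hxeq⟩ := (hpair A hAP B hBP hABne).1
  obtain ⟨hne2, x2, hx2eq⟩ := (hpair A hAP B hBP hABne).2
  obtain ⟨m, f, b, hformA⟩ := (hpoly A hAP).1
  obtain ⟨m2, f2, b2, hformB⟩ := (hpoly B hBP).1
  have hAne : (hSet f b).Nonempty := by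
    have := (hpoly A hAP).2; rwa [hformA] at this
  have hBne : (hSet f2 b2).Nonempty := by
    have := (hpoly B hBP).2; rwa [hformB] at this
  have hrecA : recPoly A = hSet f 0 := by rw [hformA]; exact recPoly_hSet f b hAne
  have hrecB : recPoly B = hSet f2 0 := by rw [hformB]; exact recPoly_hSet f2 b2 hBne
  have hρ1 : recPoly (A ∩ B) = faceSet (recPoly A) x := by
    conv_lhs => rw [hxeq]
    rw [hformA]
    exact recPoly_faceSet f b x (by
      have := hne1; rw [hxeq, hformA] at this; exact this)
  have hρ2 : recPoly (A ∩ B) = faceSet (recPoly B) x2 := by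
    conv_lhs => rw [hx2eq]
    rw [hformB]
    exact recPoly_faceSet f2 b2 x2 (by
      have := hne2; rw [hx2eq, hformB] at this; exact this)
  have hρB : recPoly (A ∩ B) ⊆ recPoly B := by
    rw [hρ2]; exact faceSet_subset _ _
  have hwρ : w ∈ recPoly (A ∩ B) := by
    intro z hzz
    exact ⟨hwA z hzz.1, hwB z hzz.2⟩
  have hfacene : (faceSet (hSet f 0) x).Nonempty := by
    refine ⟨w, ?_⟩
    rw [← hrecA, ← hρ1]
    exact hwρ
  obtain ⟨hxnn, hxchar⟩ := cone_face f x hfacene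
  have hxw0 : x w = 0 := by
    have : w ∈ faceSet (hSet f 0) x := by rw [← hrecA, ← hρ1]; exact hwρ
    rw [hxchar] at this
    exact this.2
  have hnnτ : ∀ u ∈ τ, 0 ≤ x u := by
    intro u hu
    apply hxnn
    rw [← hrecA]
    exact hτA hu
  have hzero : ∀ v ∈ τ, x v = 0 := hrel x hnnτ hxw0
  have hmemface : ∀ v, v ∈ recPoly A → x v = 0 → v ∈ recPoly B := by
    intro v hvA hv0
    apply hρB
    rw [hρ1, hrecA]
    rw [hxchar]
    exact ⟨by rw [← hrecA]; exact hvA, hv0⟩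
  refine ⟨?_, ?_, ?_⟩
  · intro v hv
    exact hmemface v (hτA hv) (hzero v hv)
  · have hsum : x (yy + zz) = 0 := hzero _ hyz
    rw [map_add] at hsum
    have h1 : 0 ≤ x yy := hxnn _ (by rw [← hrecA]; exact hy)
    have h2 : 0 ≤ x zz := hxnn _ (by rw [← hrecA]; exact hz)
    exact hmemface yy hy (by linarith)
  · have hsum : x (yy + zz) = 0 := hzero _ hyz
    rw [map_add] at hsum
    have h1 : 0 ≤ x yy := hxnn _ (by rw [← hrecA]; exact hy)
    have h2 : 0 ≤ x zz := hxnn _ (by rw [← hrecA]; exact hz)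
    exact hmemface zz hz (by linarith)

/-- the main common-face lemma: recession cones of any two members intersect
in a common face. -/
lemma common_face [FiniteDimensional ℝ E] {P : Set (Set E)} (hP : IsPolyComplex P)
    (hMW : MWCondition (polySupport P)) (hconn : IsConnected (polySupport P))
    {Λ Γ : Set E} (hΛ : Λ ∈ P) (hΓ : Γ ∈ P) :
    IsFaceOf (recPoly Λ ∩ recPoly Γ) (recPoly Λ) := by
  classical
  obtain ⟨hPne, hPfin, hpoly, hfaces, hpair⟩ := hP
  obtain ⟨m, f, b, hformΛ⟩ := (hpoly Λ hΛ).1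
  obtain ⟨m2, g, c, hformΓ⟩ := (hpoly Γ hΓ).1
  have hΛne : (hSet f b).Nonempty := by
    have := (hpoly Λ hΛ).2; rwa [hformΛ] at this
  have hΓne : (hSet g c).Nonempty := by
    have := (hpoly Γ hΓ).2; rwa [hformΓ] at this
  have hrecΛ : recPoly Λ = hSet f 0 := by rw [hformΛ]; exact recPoly_hSet f b hΛne
  have hrecΓ : recPoly Γ = hSet g 0 := by rw [hformΓ]; exact recPoly_hSet g c hΓne
  set τ : Set E := recPoly Λ ∩ recPoly Γ with hτdef
  have hτh : τ = hSet (Sum.elim f g) 0 := by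
    rw [hτdef, hrecΛ, hrecΓ, hSet0_pair]
  obtain ⟨w, hwτ', hrel'⟩ := exists_relint (Sum.elim f g)
  have hwτ : w ∈ τ := by rw [hτh]; exact hwτ'
  have hrel : ∀ x : E →ₗ[ℝ] ℝ, (∀ u ∈ τ, 0 ≤ x u) → x w = 0 → ∀ v ∈ τ, x v = 0 := by
    intro x hx hxw v hv
    refine hrel' x (fun u hu => hx u ?_) hxw v ?_
    · rw [hτh]; exact hu
    · rw [← hτh]; exact hv
  have hchain := chain_claim ⟨hPne, hPfin, hpoly, hfaces, hpair⟩ hMW hconn hΛ hΓ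
    hwτ.1 hwτ.2
  have prop : ∀ X Y : Set E, Relation.ReflTransGen (adjW P w) X Y → τ ⊆ recPoly X →
      ∀ yy zz : E, yy ∈ recPoly X → zz ∈ recPoly X → yy + zz ∈ τ →
      (τ ⊆ recPoly Y ∧ yy ∈ recPoly Y ∧ zz ∈ recPoly Y) := by
    intro X Y hXY
    induction hXY with
    | refl =>
        intro h1 yy zz h2 h3 h4
        exact ⟨h1, h2, h3⟩
    | tail hab hbc ih =>
        intro h1 yy zz h2 h3 h4
        obtain ⟨h5, h6, h7⟩ := ih h1 yy zz h2 h3 h4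
        exact edge_step hpoly hpair hrel hbc h5 yy zz h6 h7 h4
  have hext : ∀ a ∈ hSet f 0, ∀ b' ∈ hSet f 0, a + b' ∈ τ → a ∈ τ ∧ b' ∈ τ := by
    intro a ha b' hb' hab
    have h1 := prop Λ Γ hchain Set.inter_subset_left a b'
      (by rw [hrecΛ]; exact ha) (by rw [hrecΛ]; exact hb') hab
    constructor
    · exact ⟨by rw [hrecΛ]; exact ha, h1.2.1⟩
    · exact ⟨by rw [hrecΛ]; exact hb', h1.2.2⟩
  have h0τ : (0:E) ∈ τ := ⟨zero_mem_recPoly Λ, zero_mem_recPoly Γ⟩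
  have haddτ : ∀ a ∈ τ, ∀ b' ∈ τ, a + b' ∈ τ := by
    intro a ha b' hb'
    rw [hτh] at ha hb' ⊢
    exact hSet0_add ha hb'
  have hsmulτ : ∀ a ∈ τ, ∀ t : ℝ, 0 < t → t • a ∈ τ := by
    intro a ha t ht
    rw [hτh] at ha ⊢
    exact hSet0_smul ha (le_of_lt ht)
  have hsubτ : τ ⊆ hSet f 0 := by
    rw [← hrecΛ]
    exact Set.inter_subset_left
  obtain ⟨x, hx⟩ := extreme_isFace f τ hsubτ h0τ haddτ hsmulτ hext
  refine ⟨⟨0, h0τ⟩, x, ?_⟩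
  rw [hx, hrecΛ]

end Aux6
/-- Theorem 14(3) for `rec`: if moreover every member of `Π`
is strongly convex, then `rec(Π)` is a fan. -/
theorem statement4 {n : ℕ} (P : Set (Set (Fin n → ℝ))) (hP : IsPolyComplex P)
    (hconn : IsConnected (polySupport P)) (hMW : MWCondition (polySupport P))
    (hsc : ∀ Λ ∈ P, StronglyConvexSet Λ) :
    IsFan (recComplex P) := by
  classical
  obtain ⟨hPne, hPfin, hpoly, hfaces, hpair⟩ := hP
  have hP' : IsPolyComplex P := ⟨hPne, hPfin, hpoly, hfaces, hpair⟩
  have hdata : ∀ Λ ∈ P, ∃ (m : ℕ) (f : Fin m → (Fin n → ℝ) →ₗ[ℝ] ℝ) (b : Fin m → ℝ),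
      Λ = hSet f b ∧ (hSet f b).Nonempty ∧ recPoly Λ = hSet f 0 := by
    intro Λ hΛ
    obtain ⟨m, f, b, hform⟩ := (hpoly Λ hΛ).1
    have hne : (hSet f b).Nonempty := by
      have := (hpoly Λ hΛ).2; rwa [hform] at this
    exact ⟨m, f, b, hform, hne, by rw [hform]; exact recPoly_hSet f b hne⟩
  refine ⟨⟨⟨?_, ?_, ?_, ?_, ?_⟩, ?_⟩, ?_⟩
  · -- nonempty
    obtain ⟨Λ, hΛ⟩ := hPne
    exact ⟨recPoly Λ, Λ, hΛ, rfl⟩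
  · -- finite
    have h : recComplex P = (fun Λ => recPoly Λ) '' P := by
      ext C; constructor
      · rintro ⟨Λ, hΛ, rfl⟩; exact ⟨Λ, hΛ, rfl⟩
      · rintro ⟨Λ, hΛ, rfl⟩; exact ⟨Λ, hΛ, rfl⟩
    rw [h]
    exact hPfin.image _
  · -- polyhedron and nonempty
    rintro S ⟨Λ, hΛ, rfl⟩
    obtain ⟨m, f, b, hform, hne, hrec⟩ := hdata Λ hΛ
    constructor
    · exact ⟨m, f, 0, by rw [hrec]; rfl⟩
    · exact ⟨0, zero_mem_recPoly Λ⟩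
  · -- closed under faces
    rintro S ⟨Λ, hΛ, rfl⟩ Fc hFc
    obtain ⟨hFne, x, hFeq⟩ := hFc
    obtain ⟨m, f, b, hform, hne, hrec⟩ := hdata Λ hΛ
    have hfacecone : (faceSet (hSet f 0) x).Nonempty := by
      have := hFne
      rw [hFeq, hrec] at this
      exact this
    obtain ⟨hxnn, hxchar⟩ := cone_face f x hfacecone
    have hxnnrec : ∀ v ∈ recPoly (hSet f b), 0 ≤ x v := by
      intro v hv
      apply hxnn
      rwa [recPoly_hSet f b hne] at hv
    obtain ⟨p, hp, hpmin⟩ := attain f b hne x hxnnrec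
    have hΓne : (faceSet (hSet f b) x).Nonempty := ⟨p, hp, hpmin⟩
    have hΓface : IsFaceOf (faceSet (hSet f b) x) Λ := by
      rw [hform]
      exact ⟨hΓne, x, rfl⟩
    have hΓP : faceSet (hSet f b) x ∈ P := hfaces Λ hΛ _ hΓface
    refine ⟨faceSet (hSet f b) x, hΓP, ?_⟩
    rw [recPoly_faceSet f b x hΓne, hFeq, hform]
  · -- pairwise common faces
    rintro S ⟨Λ, hΛ, rfl⟩ T ⟨Γ, hΓ, rfl⟩ hneST
    constructor
    · exact common_face hP' hMW hconn hΛ hΓ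
    · rw [Set.inter_comm]
      exact common_face hP' hMW hconn hΓ hΛ
  · -- polyhedral cones
    rintro S ⟨Λ, hΛ, rfl⟩
    obtain ⟨m, f, b, hform, hne, hrec⟩ := hdata Λ hΛ
    obtain ⟨F, hF⟩ := weyl f
    exact ⟨F, by rw [hrec, hF]; rfl⟩
  · -- strongly convex
    rintro S ⟨Λ, hΛ, rfl⟩
    rintro ⟨p, d, hd, hline⟩
    obtain ⟨m, f, b, hform, hne, hrec⟩ := hdata Λ hΛ
    have hlin : ∀ i, f i d = 0 := by
      intro i
      by_contra hne0
      have hbound : ∀ t : ℝ, f i p + t * f i d ≤ 0 := by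
        intro t
        have := hline t
        rw [hrec] at this
        have h2 := this i
        have he : f i (p + t • d) = f i p + t * f i d := by
          rw [map_add, map_smul, smul_eq_mul]
        rw [he] at h2
        exact h2
      have := hbound ((1 - f i p) / f i d)
      rw [div_mul_cancel₀ _ hne0] at this
      linarith
    obtain ⟨q, hq⟩ := hne
    apply hsc Λ hΛ
    refine ⟨q, d, hd, fun t => ?_⟩
    rw [hform]
    intro i
    have he : f i (q + t • d) = f i q + t * f i d := by
      rw [map_add, map_smul, smul_eq_mul]
    rw [he, hlin i, mul_zero, add_zero]
    exact hq i
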